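/- (Abstract form of the main Theorem, time-average version.) Let E be a finite-dimensional complex inner product space. Let H⁰, V, P : E → E be self-adjoint linear maps and set H = H⁰ + V. Suppose (e_α) is an orthonormal basis of E consisting of joint eigenvectors: H⁰ e_α = ε_α e_α and P e_α = p_α e_α with real ε_α, p_α. Let ψ be a unit vector with H⁰ ψ = ε₀ ψ and P ψ = p0 ψ for reals ε₀, p0. Let λ > 0 and assume that p0 − p_α ≤ λ·(ε_α − ε₀) for every α. Suppose (Ψ_j) is an orthonormal basis of E with H Ψ_j = E_j Ψ_j, where the real eigenvalues E_j are pairwise distinct. Then the infinite-time averaged impurity momentum p_∞ = lim_{T→∞} (1/T)·∫₀^T ⟨exp(−itH)ψ, P exp(−itH)ψ⟩ dt exists and satisfies p_∞ ≥ p0 − λ·( ⟨ψ, V ψ⟩ − Σ_j |⟨ψ, Ψ_j⟩|² ⟨Ψ_j, V Ψ_j⟩ ). -/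

import Mathlib

open scoped InnerProductSpace ComplexConjugate
open Complex Filter Topology Finset

/-!
Expanding `ψ = ∑ⱼ cⱼ Ψⱼ` in the eigenbasis of `H`, the expectation of `P` in the evolved state is
the finite trigonometric sum `∑ⱼₖ c̄ⱼ cₖ ⟪Ψⱼ, P Ψₖ⟫ e^{i (Eⱼ - Eₖ) t}`. Its time average converges
term by term, and since the `Eⱼ` are distinct only the diagonal survives:
`p_∞ = ∑ⱼ |cⱼ|² ⟪Ψⱼ, P Ψⱼ⟫`. Averaging the sector bound over the joint eigenbasis `e` gives the
quadratic-form inequality `p0 - P ≤ λ (H⁰ - ε₀)` on every vector. Evaluated on `Ψⱼ`, where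
`H⁰ = Eⱼ - V` in expectation, and averaged with the weights `|cⱼ|²`, whose mean energy
`∑ⱼ |cⱼ|² Eⱼ = ⟪ψ, H ψ⟫ = ε₀ + ⟪ψ, V ψ⟫` is that of the initial state, it yields the bound.
-/

theorem exp_apply_of_apply_eq_smul {F : Type*} [NormedAddCommGroup F] [NormedSpace ℂ F]
    [CompleteSpace F] {A : F →L[ℂ] F} {v : F} {μ : ℂ} (h : A v = μ • v) :
    NormedSpace.exp A v = cexp μ • v := by
  have hpow : ∀ n : ℕ, (A ^ n) v = μ ^ n • v := fun n ↦ by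
    induction n with
    | zero => simp
    | succ n ih => rw [pow_succ, mul_apply_eq_comp, h, map_smul, ih, smul_smul,
        ← pow_succ']
  have hA := ((NormedSpace.exp_series_hasSum_exp' (𝕂 := ℂ) A).mapL
    (ContinuousLinearMap.apply ℂ F v))
  have hμ := (NormedSpace.exp_series_hasSum_exp' (𝕂 := ℂ) μ).smul_const v
  simp only [ContinuousLinearMap.apply_apply, smul_apply, hpow,
    smul_smul, smul_eq_mul] at hA hμ
  rw [hA.unique hμ, exp_eq_exp_ℂ]

noncomputable def timeAverage (f : ℝ → ℝ) (T : ℝ) : ℝ := (1 / T) * ∫ t in (0)..T, f t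

theorem tendsto_timeAverage_finset_sum {κ : Type*} {s : Finset κ} {f : κ → ℝ → ℝ} {L : κ → ℝ}
    (hf : ∀ k ∈ s, Continuous (f k))
    (hL : ∀ k ∈ s, Tendsto (timeAverage (f k)) atTop (𝓝 (L k))) :
    Tendsto (timeAverage fun t ↦ ∑ k ∈ s, f k t) atTop (𝓝 (∑ k ∈ s, L k)) := by
  have hsum : timeAverage (fun t ↦ ∑ k ∈ s, f k t) = fun T ↦ ∑ k ∈ s, timeAverage (f k) T := by
    ext T
    simp only [timeAverage, intervalIntegral.integral_finsetSum fun k hk ↦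
      (hf k hk).intervalIntegrable _ _, mul_sum]
  rw [hsum]
  exact tendsto_finsetSum s hL

theorem norm_integral_cexp_mul_I_le {ω : ℝ} (hω : ω ≠ 0) (T : ℝ) :
    ‖∫ t in (0)..T, cexp (ω * t * I)‖ ≤ 2 / |ω| := by
  have hωI : (ω : ℂ) * I ≠ 0 := mul_ne_zero (ofReal_ne_zero.mpr hω) I_ne_zero
  simp_rw [mul_right_comm _ _ I]
  rw [integral_exp_mul_complex hωI, norm_div, norm_mul, norm_I, mul_one, norm_real,
    Real.norm_eq_abs]
  gcongr
  calc ‖cexp (ω * I * T) - cexp (ω * I * (0:ℝ))‖ ≤ ‖cexp (ω * I * T)‖ + ‖cexp (ω * I * (0:ℝ))‖ :=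
        norm_sub_le _ _
    _ = 2 := by
      rw [mul_right_comm, ← ofReal_mul, norm_exp_ofReal_mul_I]
      norm_num

theorem tendsto_timeAverage_re_mul_cexp (a : ℂ) (ω : ℝ) :
    Tendsto (timeAverage fun t ↦ (a * cexp (ω * t * I)).re) atTop
      (𝓝 (if ω = 0 then a.re else 0)) := by
  split_ifs with hω
  · subst hω
    refine tendsto_const_nhds.congr' ?_
    filter_upwards [eventually_ne_atTop 0] with T hT
    simp [timeAverage, hT]
  · have hbdd : ∀ T, ‖∫ t in (0)..T, (a * cexp (ω * t * I)).re‖ ≤ ‖a‖ * (2 / |ω|) := fun T ↦ by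
      have hint : IntervalIntegrable (fun t : ℝ ↦ a * cexp (ω * t * I)) MeasureTheory.volume 0 T :=
        (by fun_prop : Continuous fun t : ℝ ↦ a * cexp (ω * t * I)).intervalIntegrable _ _
      have hre := intervalIntegral.intervalIntegral_re hint
      simp only [RCLike.re_to_complex] at hre
      rw [hre, intervalIntegral.integral_const_mul]
      calc ‖(a * ∫ t in (0)..T, cexp (ω * t * I)).re‖
          ≤ ‖a * ∫ t in (0)..T, cexp (ω * t * I)‖ := abs_re_le_norm _
        _ ≤ ‖a‖ * (2 / |ω|) := by
          rw [norm_mul]; gcongr; exact norm_integral_cexp_mul_I_le hω T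
    have hinv : Tendsto (fun T : ℝ ↦ 1 / T) atTop (𝓝 0) := by
      simpa only [one_div] using tendsto_inv_atTop_zero
    exact hinv.zero_mul_isBoundedUnder_le (isBoundedUnder_of ⟨_, hbdd⟩)

section

variable {E : Type*} [NormedAddCommGroup E] [InnerProductSpace ℂ E]
  {ι : Type*} [Fintype ι] (b : OrthonormalBasis ι ℂ E)

theorem re_inner_map_self_eq_sum {A : E →L[ℂ] E} {a : ι → ℝ}
    (hA : ∀ i, A (b i) = (a i : ℂ) • b i) (x : E) :
    (⟪x, A x⟫_ℂ).re = ∑ i, ‖⟪x, b i⟫_ℂ‖ ^ 2 * a i := by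
  have hAx : A x = ∑ i, (⟪b i, x⟫_ℂ * a i) • b i := by
    conv_lhs => rw [← b.sum_repr' x]
    simp only [map_sum, map_smul, hA, smul_smul]
  simp only [hAx, inner_sum, inner_smul_right, re_sum]
  refine sum_congr rfl fun i _ ↦ ?_
  rw [← inner_conj_symm, mul_right_comm, conj_mul', ← ofReal_pow, ← ofReal_mul, ofReal_re]

theorem sub_re_inner_le_of_eigenvalues {A B : E →L[ℂ] E} {a β : ι → ℝ}
    (hA : ∀ i, A (b i) = (a i : ℂ) • b i) (hB : ∀ i, B (b i) = (β i : ℂ) • b i)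
    {a₀ β₀ c : ℝ} (h : ∀ i, a₀ - a i ≤ c * (β i - β₀)) (x : E) :
    a₀ * ‖x‖ ^ 2 - (⟪x, A x⟫_ℂ).re ≤ c * ((⟪x, B x⟫_ℂ).re - β₀ * ‖x‖ ^ 2) := by
  rw [re_inner_map_self_eq_sum b hA, re_inner_map_self_eq_sum b hB,
    ← b.sum_sq_norm_inner_left, mul_sum, mul_sum, ← sum_sub_distrib, ← sum_sub_distrib, mul_sum]
  refine sum_le_sum fun i _ ↦ ?_
  have hw : 0 ≤ ‖⟪x, b i⟫_ℂ‖ ^ 2 := by positivity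
  nlinarith [mul_le_mul_of_nonneg_left (h i) hw]

variable [CompleteSpace E]

theorem exp_smul_apply_eq_sum {H : E →L[ℂ] E} {μ : ι → ℝ}
    (hH : ∀ i, H (b i) = (μ i : ℂ) • b i) (s : ℂ) (x : E) :
    NormedSpace.exp (s • H) x = ∑ i, (⟪b i, x⟫_ℂ * cexp (s * μ i)) • b i := by
  conv_lhs => rw [← b.sum_repr' x, map_sum]
  refine sum_congr rfl fun i _ ↦ ?_
  rw [map_smul, exp_apply_of_apply_eq_smul (μ := s * μ i), smul_smul]
  rw [smul_apply, hH, smul_smul]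

theorem re_inner_exp_apply_eq_sum {H : E →L[ℂ] E} {μ : ι → ℝ}
    (hH : ∀ i, H (b i) = (μ i : ℂ) • b i) (A : E →L[ℂ] E) (x : E) (t : ℝ) :
    (⟪NormedSpace.exp ((-(I * t)) • H) x, A (NormedSpace.exp ((-(I * t)) • H) x)⟫_ℂ).re
      = ∑ i, ∑ j, (conj ⟪b i, x⟫_ℂ * ⟪b j, x⟫_ℂ * ⟪b i, A (b j)⟫_ℂ
          * cexp ((μ i - μ j : ℝ) * t * I)).re := by
  simp only [exp_smul_apply_eq_sum b hH, map_sum, map_smul, sum_inner, inner_sum,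
    inner_smul_left, inner_smul_right, mul_sum, re_sum]
  rw [sum_comm]
  refine sum_congr rfl fun i _ ↦ sum_congr rfl fun j _ ↦ congrArg re ?_
  have hphase : conj (cexp (-(I * t) * μ i)) * cexp (-(I * t) * μ j)
      = cexp ((μ i - μ j : ℝ) * t * I) := by
    rw [← exp_conj, ← exp_add]
    congr 1
    simp only [map_mul, map_neg, conj_I, conj_ofReal]
    push_cast
    ring
  rw [← hphase, map_mul]
  ring

theorem tendsto_timeAverage_re_inner_exp {H : E →L[ℂ] E} {μ : ι → ℝ}
    (hH : ∀ i, H (b i) = (μ i : ℂ) • b i) (hμ : Function.Injective μ) (A : E →L[ℂ] E) (x : E) :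
    Tendsto (timeAverage fun t ↦
        (⟪NormedSpace.exp ((-(I * t)) • H) x, A (NormedSpace.exp ((-(I * t)) • H) x)⟫_ℂ).re)
      atTop (𝓝 (∑ i, ‖⟪x, b i⟫_ℂ‖ ^ 2 * (⟪b i, A (b i)⟫_ℂ).re)) := by
  simp_rw [re_inner_exp_apply_eq_sum b hH]
  have hcont (a : ℂ) (ω : ℝ) : Continuous fun t : ℝ ↦ (a * cexp (ω * t * I)).re := by fun_prop
  have h := tendsto_timeAverage_finset_sum (s := univ)
    (fun i _ ↦ continuous_finsetSum _ fun j _ ↦ hcont _ _)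
    fun i _ ↦ tendsto_timeAverage_finset_sum (s := univ) (fun j _ ↦ hcont _ _)
      fun j _ ↦ tendsto_timeAverage_re_mul_cexp (conj ⟪b i, x⟫_ℂ * ⟪b j, x⟫_ℂ * ⟪b i, A (b j)⟫_ℂ)
        (μ i - μ j)
  convert h using 1
  refine congrArg _ (sum_congr rfl fun i _ ↦ ?_)
  rw [sum_eq_single i (fun j _ hji ↦ if_neg (sub_ne_zero.mpr (hμ.ne hji.symm))) (by simp),
    if_pos (sub_self _), conj_mul', ← ofReal_pow, re_ofReal_mul, norm_inner_symm]

end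

theorem time_averaged_momentum_lower_bound_general
    {E : Type*} [NormedAddCommGroup E] [InnerProductSpace ℂ E]
    [FiniteDimensional ℂ E]
    {ι ι' : Type*} [Fintype ι] [Fintype ι']
    (H0 V P H : E →L[ℂ] E)
    (hH : H = H0 + V)
    (e : OrthonormalBasis ι ℂ E) (ε p : ι → ℝ)
    (he_H0 : ∀ α, H0 (e α) = (ε α : ℂ) • e α)
    (he_P : ∀ α, P (e α) = (p α : ℂ) • e α)
    (ψ : E) (hψ : ‖ψ‖ = 1) (ε0 p0 : ℝ)
    (hψ_H0 : H0 ψ = (ε0 : ℂ) • ψ)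
    (lam : ℝ)
    (hbound : ∀ α, p0 - p α ≤ lam * (ε α - ε0))
    (Ψ : OrthonormalBasis ι' ℂ E) (Ej : ι' → ℝ)
    (hΨ : ∀ j, H (Ψ j) = (Ej j : ℂ) • Ψ j)
    (hnondeg : Function.Injective Ej) :
    ∃ pinf : ℝ,
      Filter.Tendsto
        (fun T : ℝ => (1 / T) *
          ∫ t in (0)..T,
            (⟪NormedSpace.exp ((-(Complex.I * t)) • H) ψ,
               P (NormedSpace.exp ((-(Complex.I * t)) • H) ψ)⟫_ℂ).re)
        Filter.atTop (nhds pinf)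
      ∧ p0 - lam * ((⟪ψ, V ψ⟫_ℂ).re
            - ∑ j, ‖⟪ψ, Ψ j⟫_ℂ‖ ^ 2 * (⟪Ψ j, V (Ψ j)⟫_ℂ).re)
          ≤ pinf := by
  refine ⟨_, tendsto_timeAverage_re_inner_exp Ψ hΨ hnondeg P ψ, ?_⟩
  set w : ι' → ℝ := fun j ↦ ‖⟪ψ, Ψ j⟫_ℂ‖ ^ 2
  have hw : ∀ j, 0 ≤ w j := fun j ↦ by positivity
  have hw_sum : ∑ j, w j = 1 := by simp [w, Ψ.sum_sq_norm_inner_left, hψ]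
  have hw_energy : ∑ j, w j * Ej j = ε0 + (⟪ψ, V ψ⟫_ℂ).re := by
    rw [← re_inner_map_self_eq_sum Ψ hΨ, hH, add_apply, inner_add_right,
      hψ_H0, inner_smul_right, inner_self_eq_norm_sq_to_K, hψ]
    simp
  have hH0_Ψ : ∀ j, (⟪Ψ j, H0 (Ψ j)⟫_ℂ).re = Ej j - (⟪Ψ j, V (Ψ j)⟫_ℂ).re := fun j ↦ by
    have hH_Ψ : (⟪Ψ j, H (Ψ j)⟫_ℂ).re = Ej j := by
      simp [hΨ j, inner_self_eq_norm_sq_to_K, Ψ.orthonormal.1 j]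
    rw [hH, add_apply, inner_add_right, add_re] at hH_Ψ
    linarith
  have hbound_Ψ : ∀ j, p0 - (⟪Ψ j, P (Ψ j)⟫_ℂ).re
      ≤ lam * (Ej j - (⟪Ψ j, V (Ψ j)⟫_ℂ).re - ε0) := fun j ↦ by
    simpa [Ψ.orthonormal.1 j, hH0_Ψ] using sub_re_inner_le_of_eigenvalues e he_P he_H0 hbound (Ψ j)
  have havg : ∑ j, w j * (p0 - (⟪Ψ j, P (Ψ j)⟫_ℂ).re)
      ≤ ∑ j, w j * (lam * (Ej j - (⟪Ψ j, V (Ψ j)⟫_ℂ).re - ε0)) :=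
    sum_le_sum fun j _ ↦ mul_le_mul_of_nonneg_left (hbound_Ψ j) (hw j)
  simp only [mul_sub, mul_left_comm (w _) lam, sum_sub_distrib, ← mul_sum, ← sum_mul,
    hw_sum, hw_energy] at havg
  linarith

/-- Abstract form of the main Theorem (time-average version): under the
sector bound `p0 − p_α ≤ λ (ε_α − ε₀)` for all joint eigenstates of `H⁰` and
`P`, and assuming the spectrum of `H = H⁰ + V` is nondegenerate, the
infinite-time averaged impurity momentum
`p_∞ = lim_{T→∞} (1/T) ∫₀^T ⟨exp(−itH)ψ, P exp(−itH)ψ⟩ dt`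
exists and satisfies
`p_∞ ≥ p0 − λ (⟨ψ, V ψ⟩ − ∑_j |⟨ψ, Ψ_j⟩|² ⟨Ψ_j, V Ψ_j⟩)`. -/
theorem time_averaged_momentum_lower_bound
    {E : Type*} [NormedAddCommGroup E] [InnerProductSpace ℂ E]
    [FiniteDimensional ℂ E]
    {ι ι' : Type*} [Fintype ι] [Fintype ι']
    (H0 V P H : E →L[ℂ] E)
    (hH0 : ∀ x y : E, ⟪H0 x, y⟫_ℂ = ⟪x, H0 y⟫_ℂ)
    (hV : ∀ x y : E, ⟪V x, y⟫_ℂ = ⟪x, V y⟫_ℂ)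
    (hP : ∀ x y : E, ⟪P x, y⟫_ℂ = ⟪x, P y⟫_ℂ)
    (hH : H = H0 + V)
    (e : OrthonormalBasis ι ℂ E) (ε p : ι → ℝ)
    (he_H0 : ∀ α, H0 (e α) = (ε α : ℂ) • e α)
    (he_P : ∀ α, P (e α) = (p α : ℂ) • e α)
    (ψ : E) (hψ : ‖ψ‖ = 1) (ε0 p0 : ℝ)
    (hψ_H0 : H0 ψ = (ε0 : ℂ) • ψ)
    (hψ_P : P ψ = (p0 : ℂ) • ψ)
    (lam : ℝ) (hlam : 0 < lam)
    (hbound : ∀ α, p0 - p α ≤ lam * (ε α - ε0))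
    (Ψ : OrthonormalBasis ι' ℂ E) (Ej : ι' → ℝ)
    (hΨ : ∀ j, H (Ψ j) = (Ej j : ℂ) • Ψ j)
    (hnondeg : Function.Injective Ej) :
    ∃ pinf : ℝ,
      Filter.Tendsto
        (fun T : ℝ => (1 / T) *
          ∫ t in (0)..T,
            (⟪NormedSpace.exp ((-(Complex.I * t)) • H) ψ,
               P (NormedSpace.exp ((-(Complex.I * t)) • H) ψ)⟫_ℂ).re)
        Filter.atTop (nhds pinf)
      ∧ p0 - lam * ((⟪ψ, V ψ⟫_ℂ).re
            - ∑ j, ‖⟪ψ, Ψ j⟫_ℂ‖ ^ 2 * (⟪Ψ j, V (Ψ j)⟫_ℂ).re)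
          ≤ pinf :=
  time_averaged_momentum_lower_bound_general H0 V P H hH e ε p he_H0 he_P ψ hψ ε0 p0 hψ_H0 lam
    hbound Ψ Ej hΨ hnondeg
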